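/- arXiv:1310.4643 — 2 statements merged into one kernel-verified Lean document; each statement's English description precedes it below -/
import Mathlib

section
/- Let (X,d) be a metric space equipped with a Borel measure μ, let m ≥ 1 be an integer, and fix x ∈ X. Let H : (0,∞) × X × X → [0,∞) be a measurable kernel that is symmetric in the space variables, satisfies the semigroup identity H(t+s,x,y) = ∫_X H(t,x,z)·H(s,z,y) dμ(z) for all t,s > 0, is stochastically complete (∫_X H(t,z,y) dμ(y) = 1 for all t > 0 and z ∈ X), and satisfies the Markvorsen bound of dimension m: H(t,z,y) ≤ (4πt)^{-m/2}·exp(-d(z,y)²/(4t)) for all t > 0 and z,y ∈ X. Assume that the function s ↦ μ(B_s(x))/(ω_m s^m) is nondecreasing on (0,∞) and converges, as s → ∞, to a limit E with 0 < E < 1/C_m. Then (1 - E·C_m)²/E ≤ limsup_{t→∞} (4πt)^{m/2}·H(t,x,x) ≤ 1. -/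
open MeasureTheory Real Filter Set

/-- Upper incomplete Gamma function `Γ(a,x) = ∫ₓ^∞ u^(a-1) e^(-u) du`. -/
noncomputable def incGamma (a x : ℝ) : ℝ := ∫ u in Set.Ioi x, u ^ (a - 1) * Real.exp (-u)

/-- Volume `ω_m` of the unit ball in `ℝ^m`. -/
noncomputable def omegaBall (m : ℕ) : ℝ := Real.pi ^ ((m : ℝ) / 2) / Real.Gamma ((m : ℝ) / 2 + 1)

/-- The constant `C_m = Γ(m/2, 2 ((m/2) Γ(m/2))^(2/m)) / Γ(m/2)`. -/
noncomputable def Cm (m : ℕ) : ℝ :=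
  incGamma ((m : ℝ) / 2) (2 * (((m : ℝ) / 2) * Real.Gamma ((m : ℝ) / 2)) ^ (2 / (m : ℝ))) /
    Real.Gamma ((m : ℝ) / 2)

open Metric Topology

/-!
The upper bound is Markvorsen's bound on the diagonal. For the lower bound fix `r > 0` and the time
`t = r² / 4a`, where `a = cmScale m`. Writing `exp (-d²/4t) = ∫_{d²/4t}^∞ e^{-u} du` and using
`μ(B_s) ≤ E ω_m s^m` (the quotient `Q` increases to `E`), the Gaussian mass outside `B_r` is at most
`E ω_m (4t)^{m/2} Γ(m/2 + 1, a) - μ(B_r) e^{-a}`, and Markvorsen's bound turns this into a bound `δ`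
on the heat mass outside `B_r`. Stochastic completeness leaves mass `≥ 1 - δ` in `B_r`, and
Cauchy–Schwarz together with `∫ H(t,x,y)² dμ(y) = H(2t,x,x)` gives `(1 - δ)² ≤ μ(B_r) H(2t,x,x)`.
The choice of `a` makes `ω_m r^m = (8πt)^{m/2}`, so this reads
`(1 - δ)² / Q(r) ≤ (8πt)^{m/2} H(2t,x,x)`, and as `r → ∞`, `Q(r) → E` and `δ → E C_m`.
-/

section IncGamma

theorem integrableOn_incGamma {a : ℝ} (ha : 0 < a) {x : ℝ} (hx : 0 ≤ x) :
    IntegrableOn (fun u : ℝ => u ^ (a - 1) * exp (-u)) (Ioi x) :=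
  ((GammaIntegral_convergent ha).mono_set (Ioi_subset_Ioi hx)).congr_fun
    (fun _ _ => mul_comm _ _) measurableSet_Ioi

theorem incGamma_pos {a : ℝ} (ha : 0 < a) {x : ℝ} (hx : 0 ≤ x) : 0 < incGamma a x := by
  rw [incGamma, setIntegral_pos_iff_support_of_nonneg_ae
    (ae_restrict_of_forall_mem measurableSet_Ioi fun u hu => ?_) (integrableOn_incGamma ha hx)]
  · have hsupp : Ioi x ⊆ Function.support (fun u : ℝ => u ^ (a - 1) * exp (-u)) ∩ Ioi x :=
      fun u hu => ⟨(mul_pos (rpow_pos_of_pos (hx.trans_lt hu) _) (exp_pos _)).ne', hu⟩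
    exact (by simp : (0 : ENNReal) < volume (Ioi x)).trans_le (measure_mono hsupp)
  · have : 0 < u := hx.trans_lt hu
    positivity

theorem incGamma_add_one {a x : ℝ} (ha : 0 < a) (hx : 0 < x) :
    incGamma (a + 1) x = a * incGamma a x + x ^ a * exp (-x) := by
  have hint : IntegrableOn (fun u : ℝ => u ^ a * exp (-u)) (Ioi x) := by
    simpa using integrableOn_incGamma (a := a + 1) (by linarith) hx.le
  have hderiv : ∀ u ∈ Ici x, HasDerivAt (fun u : ℝ => -(u ^ a * exp (-u)))
      (u ^ a * exp (-u) - a * (u ^ (a - 1) * exp (-u))) u := by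
    intro u hu
    have h1 := hasDerivAt_rpow_const (p := a) (Or.inl (hx.trans_le hu).ne')
    have h2 := (hasDerivAt_neg u).exp
    exact (h1.mul h2).neg.congr_deriv (by ring)
  have htendsto : Tendsto (fun u : ℝ => -(u ^ a * exp (-u))) atTop (𝓝 0) := by
    simpa using (tendsto_rpow_mul_exp_neg_mul_atTop_nhds_zero a 1 one_pos).neg
  have hparts := integral_Ioi_of_hasDerivAt_of_tendsto' hderiv
    (hint.sub ((integrableOn_incGamma ha hx.le).const_mul a)) htendsto
  rw [integral_sub hint ((integrableOn_incGamma ha hx.le).const_mul a), integral_const_mul]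
    at hparts
  rw [incGamma, incGamma, add_sub_cancel_right]
  linarith

theorem integrableOn_and_setIntegral_exp_neg_mul_rpow_sub {p x : ℝ} (hp : -1 < p) (hx : 0 ≤ x)
    (c v : ℝ) :
    IntegrableOn (fun u => exp (-u) * (c * u ^ p - v)) (Ioi x) ∧
      ∫ u in Ioi x, exp (-u) * (c * u ^ p - v) = c * incGamma (p + 1) x - v * exp (-x) := by
  have hΓ := integrableOn_incGamma (a := p + 1) (by linarith) hx
  rw [add_sub_cancel_right] at hΓ
  have h1 := hΓ.const_mul c
  have h2 := (integrableOn_exp_neg_Ioi x).const_mul v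
  have heq : (fun u => exp (-u) * (c * u ^ p - v)) =
      fun u => c * (u ^ p * exp (-u)) - v * exp (-u) := by
    ext u; ring
  rw [heq, incGamma, add_sub_cancel_right, ← integral_exp_neg_Ioi, ← integral_const_mul,
    ← integral_const_mul, ← integral_sub h1 h2]
  exact ⟨h1.sub h2, rfl⟩

end IncGamma

theorem sq_integral_le_measureReal_mul_integral_sq {X : Type*} [MeasurableSpace X]
    {μ : Measure X} [IsFiniteMeasure μ] {f : X → ℝ} (hf : 0 ≤ᵐ[μ] f) (hf2 : MemLp f 2 μ) :
    (∫ y, f y ∂μ) ^ 2 ≤ μ.real univ * ∫ y, f y ^ 2 ∂μ := by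
  have h := integral_mul_le_Lp_mul_Lq_of_nonneg HolderConjugate.two_two hf
    (ae_of_all _ fun _ => zero_le_one) (by simpa using hf2) (memLp_const (1 : ℝ))
  simp only [integral_const, smul_eq_mul, rpow_two, one_pow, mul_one] at h
  have h0 : 0 ≤ ∫ y, f y ∂μ := integral_nonneg_of_ae hf
  have h1 : 0 ≤ ∫ y, f y ^ 2 ∂μ := integral_nonneg fun _ => sq_nonneg _
  calc (∫ y, f y ∂μ) ^ 2
      ≤ ((∫ y, f y ^ 2 ∂μ) ^ (1 / 2 : ℝ) * (μ.real univ) ^ (1 / 2 : ℝ)) ^ 2 := by gcongr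
    _ = μ.real univ * ∫ y, f y ^ 2 ∂μ := by
        rw [mul_pow, ← rpow_natCast, ← rpow_natCast (_ ^ _), ← rpow_mul h1,
          ← rpow_mul measureReal_nonneg]
        norm_num
        ring

theorem one_sub_sq_le_integral_sq_mul_measure {X : Type*} [MeasurableSpace X] {μ : Measure X}
    {f : X → ℝ} (hf_nonneg : 0 ≤ f) (hf_int : Integrable f μ)
    (hf_sq : Integrable (fun y => f y ^ 2) μ) (hf_one : ∫ y, f y ∂μ = 1) {B : Set X}
    (hB : MeasurableSet B) (hμB : μ B ≠ ⊤) {δ : ℝ} (hδ : δ ≤ 1)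
    (htail : ∫ y in Bᶜ, f y ∂μ ≤ δ) :
    (1 - δ) ^ 2 ≤ (∫ y, f y ^ 2 ∂μ) * (μ B).toReal := by
  have hB_mass : 1 - δ ≤ ∫ y in B, f y ∂μ := by linarith [integral_add_compl hB hf_int]
  have : IsFiniteMeasure (μ.restrict B) := isFiniteMeasure_restrict.mpr hμB
  have hCS := sq_integral_le_measureReal_mul_integral_sq (μ := μ.restrict B)
    (ae_of_all _ hf_nonneg)
    ((memLp_two_iff_integrable_sq hf_int.aestronglyMeasurable.restrict).mpr hf_sq.restrict)
  rw [measureReal_restrict_apply_univ] at hCS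
  calc (1 - δ) ^ 2 ≤ (∫ y in B, f y ∂μ) ^ 2 := pow_le_pow_left₀ (by linarith) hB_mass 2
    _ ≤ μ.real B * ∫ y in B, f y ^ 2 ∂μ := hCS
    _ ≤ μ.real B * ∫ y, f y ^ 2 ∂μ := mul_le_mul_of_nonneg_left
        (setIntegral_le_integral hf_sq (ae_of_all _ fun _ => sq_nonneg _)) measureReal_nonneg
    _ = (∫ y, f y ^ 2 ∂μ) * (μ B).toReal := mul_comm _ _

theorem lintegral_ofReal_exp_neg_eq {X : Type*} [MeasurableSpace X] {μ : Measure X} [SFinite μ]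
    {f : X → ℝ} (hf : Measurable f) (s : Set X) :
    ∫⁻ y in s, ENNReal.ofReal (exp (-f y)) ∂μ =
      ∫⁻ u, ENNReal.ofReal (exp (-u)) * μ (s ∩ {y | f y < u}) := by
  set G : X × ℝ → ENNReal := {p | f p.1 < p.2}.indicator fun p => ENNReal.ofReal (exp (-p.2))
  have hG : Measurable G := measurable_snd.neg.exp.ennreal_ofReal.indicator
    (measurableSet_lt (hf.comp measurable_fst) measurable_snd)
  have hexp : ∀ y, ENNReal.ofReal (exp (-f y)) = ∫⁻ u, G (y, u) := by
    intro y
    rw [← integral_exp_neg_Ioi, ofReal_integral_eq_lintegral_ofReal (integrableOn_exp_neg_Ioi _)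
      (ae_of_all _ fun _ => (exp_pos _).le), ← lintegral_indicator measurableSet_Ioi]
    rfl
  simp_rw [hexp]
  rw [lintegral_lintegral_swap (f := fun y u => G (y, u)) hG.aemeasurable]
  congr 1 with u
  have hG' : ∀ y, G (y, u) = {y | f y < u}.indicator (fun _ => ENNReal.ofReal (exp (-u))) y :=
    fun y => rfl
  simp_rw [hG']
  rw [lintegral_indicator_const (measurableSet_lt hf measurable_const),
    Measure.restrict_apply (measurableSet_lt hf measurable_const), inter_comm]

section BallGrowth

variable {X : Type*} [MetricSpace X] [MeasurableSpace X] {μ : Measure X} {x : X}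

theorem sigmaFinite_of_measure_ball_ne_top (h : ∀ s, μ (ball x s) ≠ ⊤) : SigmaFinite μ :=
  ⟨⟨⟨fun n => ball x n, fun _ => trivial, fun n => (h n).lt_top, iUnion_ball_nat x⟩⟩⟩

theorem measure_ball_ne_top_of_le {K d : ℝ}
    (hball : ∀ s, 0 < s → μ (ball x s) ≤ ENNReal.ofReal (K * s ^ d)) (s : ℝ) :
    μ (ball x s) ≠ ⊤ := by
  rcases le_or_gt s 0 with hs | hs
  · simp [ball_eq_empty.mpr hs]
  · exact ne_top_of_le_ne_top ENNReal.ofReal_ne_top (hball s hs)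


theorem measure_ball_diff_ball_le [OpensMeasurableSpace X] {K d : ℝ}
    (hball : ∀ s, 0 < s → μ (ball x s) ≤ ENNReal.ofReal (K * s ^ d)) {r ρ : ℝ} (hr : 0 < r)
    (hrρ : r ≤ ρ) :
    μ (ball x ρ \ ball x r) ≤ ENNReal.ofReal (K * ρ ^ d - (μ (ball x r)).toReal) := by
  have hfin := measure_ball_ne_top_of_le hball r
  rw [measure_sdiff (ball_subset_ball hrρ) measurableSet_ball.nullMeasurableSet hfin,
    ENNReal.ofReal_sub _ ENNReal.toReal_nonneg, ENNReal.ofReal_toReal hfin]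
  exact tsub_le_tsub_right (hball ρ (hr.trans_le hrρ)) _

theorem sqrt_mul_rpow {a b : ℝ} (ha : 0 ≤ a) (hb : 0 ≤ b) (d : ℝ) :
    √(a * b) ^ d = a ^ (d / 2) * b ^ (d / 2) := by
  rw [sqrt_eq_rpow, ← rpow_mul (by positivity), mul_rpow ha hb]
  ring_nf

/-- Outside `B_r(x)`, the sublevel set `{d(x, ·)² / 4t < u}` is the annulus
`B_{√(4tu)}(x) \ B_r(x)`, which is empty unless `u > r² / 4t`. -/
theorem measure_compl_ball_inter_le [OpensMeasurableSpace X] {K d : ℝ}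
    (hball : ∀ s, 0 < s → μ (ball x s) ≤ ENNReal.ofReal (K * s ^ d)) {r t : ℝ} (hr : 0 < r)
    (ht : 0 < t) (u : ℝ) :
    μ ((ball x r)ᶜ ∩ {y | dist x y ^ 2 / (4 * t) < u}) ≤ (Ioi (r ^ 2 / (4 * t))).indicator
      (fun u => ENNReal.ofReal (K * (4 * t) ^ (d / 2) * u ^ (d / 2) - (μ (ball x r)).toReal))
      u := by
  have hsub : (ball x r)ᶜ ∩ {y | dist x y ^ 2 / (4 * t) < u} ⊆
      ball x √(4 * t * u) \ ball x r := by
    rintro y ⟨hy, hyu⟩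
    refine ⟨?_, hy⟩
    rw [mem_ball', lt_sqrt dist_nonneg]
    have := (div_lt_iff₀ (show (0 : ℝ) < 4 * t by positivity)).mp hyu
    linarith
  have hr_eq : r = √(4 * t * (r ^ 2 / (4 * t))) := by
    rw [mul_div_cancel₀ _ (by positivity), sqrt_sq hr.le]
  by_cases hu : u ∈ Ioi (r ^ 2 / (4 * t))
  · have hru : r ≤ √(4 * t * u) := by
      rw [hr_eq]; gcongr; exact le_of_lt hu
    have hu0 : 0 ≤ u := le_trans (by positivity) (le_of_lt hu)
    rw [indicator_of_mem hu, mul_assoc, ← sqrt_mul_rpow (by positivity) hu0]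
    exact (measure_mono hsub).trans (measure_ball_diff_ball_le hball hr hru)
  · have hρr : √(4 * t * u) ≤ r := by
      rw [hr_eq]; gcongr; exact not_lt.mp hu
    rw [sdiff_eq_empty.mpr (ball_subset_ball hρr)] at hsub
    rw [indicator_of_notMem hu]
    exact (measure_mono_null hsub measure_empty).le

theorem lintegral_compl_ball_exp_le [OpensMeasurableSpace X] {K d : ℝ}
    (hball : ∀ s, 0 < s → μ (ball x s) ≤ ENNReal.ofReal (K * s ^ d)) {r t : ℝ} (hr : 0 < r)
    (ht : 0 < t) :
    ∫⁻ y in (ball x r)ᶜ, ENNReal.ofReal (exp (-dist x y ^ 2 / (4 * t))) ∂μ ≤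
      ∫⁻ u in Ioi (r ^ 2 / (4 * t)), ENNReal.ofReal
        (exp (-u) * (K * (4 * t) ^ (d / 2) * u ^ (d / 2) - (μ (ball x r)).toReal)) := by
  have := sigmaFinite_of_measure_ball_ne_top (measure_ball_ne_top_of_le hball)
  simp_rw [neg_div]
  rw [lintegral_ofReal_exp_neg_eq (by fun_prop), ← lintegral_indicator measurableSet_Ioi]
  refine lintegral_mono fun u => ?_
  have hlevel := measure_compl_ball_inter_le hball hr ht u
  by_cases hu : u ∈ Ioi (r ^ 2 / (4 * t))
  · rw [indicator_of_mem hu] at hlevel ⊢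
    rw [ENNReal.ofReal_mul (exp_pos _).le]
    exact mul_le_mul_right hlevel _
  · rw [indicator_of_notMem hu] at hlevel ⊢
    rw [nonpos_iff_eq_zero.mp hlevel, mul_zero]

theorem integrableOn_and_setIntegral_compl_ball_exp_le [OpensMeasurableSpace X] {K d : ℝ}
    (hK : 0 ≤ K) (hd : 0 ≤ d)
    (hball : ∀ s, 0 < s → μ (ball x s) ≤ ENNReal.ofReal (K * s ^ d)) {r t : ℝ} (hr : 0 < r)
    (ht : 0 < t) :
    IntegrableOn (fun y => exp (-dist x y ^ 2 / (4 * t))) (ball x r)ᶜ μ ∧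
      ∫ y in (ball x r)ᶜ, exp (-dist x y ^ 2 / (4 * t)) ∂μ ≤
        K * (4 * t) ^ (d / 2) * incGamma (d / 2 + 1) (r ^ 2 / (4 * t)) -
          (μ (ball x r)).toReal * exp (-(r ^ 2 / (4 * t))) := by
  set a := r ^ 2 / (4 * t)
  set V := (μ (ball x r)).toReal
  set c := K * (4 * t) ^ (d / 2)
  obtain ⟨hG_int, hG_eq⟩ :=
    integrableOn_and_setIntegral_exp_neg_mul_rpow_sub (p := d / 2) (by linarith)
      (by positivity : 0 ≤ a) c V
  have hV : V ≤ c * a ^ (d / 2) := by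
    have hrd : r ^ d = (4 * t) ^ (d / 2) * a ^ (d / 2) := by
      rw [← sqrt_mul_rpow (by positivity) (by positivity), mul_div_cancel₀ _ (by positivity),
        sqrt_sq hr.le]
    rw [mul_assoc, ← hrd]
    exact ENNReal.toReal_le_of_le_ofReal (by positivity) (hball r hr)
  have hG_nonneg : ∀ u ∈ Ioi a, 0 ≤ exp (-u) * (c * u ^ (d / 2) - V) := fun u hu => by
    have : c * a ^ (d / 2) ≤ c * u ^ (d / 2) := by gcongr; exact le_of_lt hu
    have : 0 ≤ c * u ^ (d / 2) - V := by linarith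
    positivity
  have hbound := (lintegral_compl_ball_exp_le hball hr ht).trans_eq
    (ofReal_integral_eq_lintegral_ofReal hG_int
      ((ae_restrict_iff' measurableSet_Ioi).mpr (ae_of_all _ hG_nonneg))).symm
  have hg_nonneg : 0 ≤ᵐ[μ.restrict (ball x r)ᶜ] fun y => exp (-dist x y ^ 2 / (4 * t)) :=
    ae_of_all _ fun _ => (exp_pos _).le
  have hg_int : IntegrableOn (fun y => exp (-dist x y ^ 2 / (4 * t))) (ball x r)ᶜ μ :=
    (lintegral_ofReal_ne_top_iff_integrable (by fun_prop) hg_nonneg).mp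
      (ne_top_of_le_ne_top ENNReal.ofReal_ne_top hbound)
  refine ⟨hg_int, ?_⟩
  rw [← hG_eq, integral_eq_lintegral_of_nonneg_ae hg_nonneg hg_int.aestronglyMeasurable]
  exact ENNReal.toReal_le_of_le_ofReal (setIntegral_nonneg measurableSet_Ioi hG_nonneg) hbound

theorem one_sub_sq_le_integral_sq_mul_measure_ball [OpensMeasurableSpace X] {K d : ℝ}
    (hK : 0 ≤ K) (hd : 0 ≤ d)
    (hball : ∀ s, 0 < s → μ (ball x s) ≤ ENNReal.ofReal (K * s ^ d)) {r t c : ℝ} (hr : 0 < r)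
    (ht : 0 < t) {f : X → ℝ} (hf_nonneg : 0 ≤ f) (hf_one : ∫ y, f y ∂μ = 1)
    (hf_le : ∀ y, f y ≤ c * exp (-dist x y ^ 2 / (4 * t)))
    (hδ : c * (K * (4 * t) ^ (d / 2) * incGamma (d / 2 + 1) (r ^ 2 / (4 * t)) -
      (μ (ball x r)).toReal * exp (-(r ^ 2 / (4 * t)))) ≤ 1) :
    (1 - c * (K * (4 * t) ^ (d / 2) * incGamma (d / 2 + 1) (r ^ 2 / (4 * t)) -
      (μ (ball x r)).toReal * exp (-(r ^ 2 / (4 * t))))) ^ 2 ≤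
        (∫ y, f y ^ 2 ∂μ) * (μ (ball x r)).toReal := by
  have hf_int : Integrable f μ := .of_integral_ne_zero (by rw [hf_one]; exact one_ne_zero)
  have hc : 0 ≤ c := (mul_nonneg_iff_of_pos_right (exp_pos _)).mp ((hf_nonneg x).trans (hf_le x))
  have hf_le_c : ∀ y, f y ≤ c := fun y => (hf_le y).trans (mul_le_of_le_one_right hc
    (exp_le_one_iff.mpr (by rw [neg_div]; exact neg_nonpos.mpr (by positivity))))
  have hf_sq : Integrable (fun y => f y ^ 2) μ := (hf_int.const_mul c).mono
    (hf_int.aestronglyMeasurable.pow 2) (ae_of_all _ fun y => by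
      rw [norm_of_nonneg (sq_nonneg _), norm_of_nonneg (mul_nonneg hc (hf_nonneg y)), sq]
      exact mul_le_mul_of_nonneg_right (hf_le_c y) (hf_nonneg y))
  obtain ⟨hg_int, hg_le⟩ := integrableOn_and_setIntegral_compl_ball_exp_le hK hd hball hr ht
  refine one_sub_sq_le_integral_sq_mul_measure hf_nonneg hf_int hf_sq hf_one measurableSet_ball
    (measure_ball_ne_top_of_le hball r) hδ ?_
  calc ∫ y in (ball x r)ᶜ, f y ∂μ ≤ ∫ y in (ball x r)ᶜ, c * exp (-dist x y ^ 2 / (4 * t)) ∂μ :=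
        setIntegral_mono_on hf_int.integrableOn (hg_int.const_mul c) measurableSet_ball.compl
          fun y _ => hf_le y
    _ ≤ _ := by rw [integral_const_mul]; exact mul_le_mul_of_nonneg_left hg_le hc

end BallGrowth

/-- The value of `r² / 4t` for which `ω_m r^m = (8πt)^{m/2}`, i.e. for which the Euclidean heat
kernel at time `2t` on the diagonal is `1 / vol(B_r)`. -/
noncomputable def cmScale (m : ℕ) : ℝ :=
  2 * (((m : ℝ) / 2) * Gamma ((m : ℝ) / 2)) ^ (2 / (m : ℝ))

section Constants

variable {m : ℕ}

theorem omegaBall_pos (m : ℕ) : 0 < omegaBall m :=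
  div_pos (rpow_pos_of_pos pi_pos _) (Gamma_pos_of_pos (by positivity))

theorem cmScale_pos (hm : 0 < m) : 0 < cmScale m := by
  have := Gamma_pos_of_pos (by positivity : (0 : ℝ) < (m : ℝ) / 2)
  unfold cmScale
  positivity

theorem cmScale_rpow (hm : 0 < m) :
    cmScale m ^ ((m : ℝ) / 2) = 2 ^ ((m : ℝ) / 2) * Gamma ((m : ℝ) / 2 + 1) := by
  have hpos : 0 < ((m : ℝ) / 2) * Gamma ((m : ℝ) / 2) :=
    mul_pos (by positivity) (Gamma_pos_of_pos (by positivity))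
  rw [cmScale, mul_rpow zero_le_two (rpow_nonneg hpos.le _), ← rpow_mul hpos.le,
    show 2 / (m : ℝ) * (m / 2) = 1 by field_simp, rpow_one, Gamma_add_one (by positivity)]

theorem omegaBall_mul_pow (hm : 0 < m) {r : ℝ} (hr : 0 ≤ r) :
    omegaBall m * r ^ m = (4 * π * (r ^ 2 / (2 * cmScale m))) ^ ((m : ℝ) / 2) := by
  have ha := cmScale_pos hm
  have hΓ : 0 < Gamma ((m : ℝ) / 2 + 1) := Gamma_pos_of_pos (by positivity)
  rw [show 4 * π * (r ^ 2 / (2 * cmScale m)) = (2 * π) * (r ^ 2) / cmScale m by field_simp; ring,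
    div_rpow (by positivity) ha.le, mul_rpow (by positivity) (by positivity), cmScale_rpow hm,
    mul_rpow zero_le_two pi_pos.le, ← rpow_natCast r, ← rpow_natCast r 2, ← rpow_mul hr,
    omegaBall]
  field_simp
  ring_nf

theorem Cm_eq (m : ℕ) : Cm m = incGamma ((m : ℝ) / 2) (cmScale m) / Gamma ((m : ℝ) / 2) := rfl

theorem Cm_pos (hm : 0 < m) : 0 < Cm m :=
  div_pos (incGamma_pos (by positivity) (cmScale_pos hm).le) (Gamma_pos_of_pos (by positivity))

end Constants

/-- The bound on the heat mass outside `B_r(x)` at time `t = r² / (4 cmScale m)`, in terms of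
`q = Q(r)`. -/
noncomputable def tailMassBound (m : ℕ) (E q : ℝ) : ℝ :=
  E * incGamma ((m : ℝ) / 2 + 1) (cmScale m) / Gamma ((m : ℝ) / 2 + 1) -
    q * 2 ^ ((m : ℝ) / 2) * exp (-cmScale m)

theorem tailMassBound_self {m : ℕ} (hm : 0 < m) (E : ℝ) : tailMassBound m E E = E * Cm m := by
  have hp : (0 : ℝ) < (m : ℝ) / 2 := by positivity
  have hΓ : 0 < Gamma ((m : ℝ) / 2) := Gamma_pos_of_pos hp
  have h2 : (0 : ℝ) < 2 ^ ((m : ℝ) / 2) := by positivity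
  rw [tailMassBound, Cm_eq, incGamma_add_one hp (cmScale_pos hm), cmScale_rpow hm,
    Gamma_add_one hp.ne']
  field_simp
  ring

theorem continuous_tailMassBound (m : ℕ) (E : ℝ) : Continuous (tailMassBound m E) := by
  unfold tailMassBound
  fun_prop

section VolumeRatio

variable {X : Type*} [MetricSpace X] [MeasurableSpace X] {μ : Measure X} {x : X} {m : ℕ}

noncomputable def volumeRatio (μ : Measure X) (x : X) (m : ℕ) (s : ℝ) : ℝ :=
  (μ (ball x s)).toReal / (omegaBall m * s ^ m)

theorem measure_ball_le_of_volumeRatio {E : ℝ} (hE : 0 < E)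
    (hmono : ∀ s₁ s₂ : ℝ, 0 < s₁ → s₁ ≤ s₂ → volumeRatio μ x m s₁ ≤ volumeRatio μ x m s₂)
    (hlim : Tendsto (volumeRatio μ x m) atTop (𝓝 E)) (s : ℝ) (hs : 0 < s) :
    μ (ball x s) ≤ ENNReal.ofReal (E * omegaBall m * s ^ (m : ℝ)) := by
  have hfin : μ (ball x s) ≠ ⊤ := by
    obtain ⟨S, hS, hsS⟩ := ((hlim.eventually_const_lt hE).and (eventually_ge_atTop s)).exists
    refine ne_top_of_le_ne_top (fun htop => ?_) (measure_mono (ball_subset_ball hsS))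
    simp [volumeRatio, htop] at hS
  have hQ : volumeRatio μ x m s ≤ E :=
    ge_of_tendsto hlim ((eventually_ge_atTop s).mono fun S hS => hmono s S hs hS)
  rw [volumeRatio, div_le_iff₀ (by have := omegaBall_pos m; positivity), ← mul_assoc] at hQ
  rw [← ENNReal.ofReal_toReal hfin, rpow_natCast]
  exact ENNReal.ofReal_le_ofReal hQ

end VolumeRatio

section HeatKernel

variable {X : Type*} {H : ℝ → X → X → ℝ} {m : ℕ} {x : X}

theorem rpow_mul_heatKernel_le_one [MetricSpace X]
    (Hmark : ∀ t : ℝ, 0 < t → ∀ z y : X,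
      H t z y ≤ (4 * π * t) ^ (-(m : ℝ) / 2) * exp (-(dist z y) ^ 2 / (4 * t)))
    {t : ℝ} (ht : 0 < t) :
    (4 * π * t) ^ ((m : ℝ) / 2) * H t x x ≤ 1 := by
  have h := Hmark t ht x x
  rw [dist_self, zero_pow two_ne_zero, neg_zero, zero_div, exp_zero, mul_one] at h
  calc (4 * π * t) ^ ((m : ℝ) / 2) * H t x x
      ≤ (4 * π * t) ^ ((m : ℝ) / 2) * (4 * π * t) ^ (-(m : ℝ) / 2) := by gcongr
    _ = 1 := by rw [← rpow_add (by positivity), neg_div, add_neg_cancel, rpow_zero]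

theorem heatKernel_two_mul_eq_integral_sq [MeasurableSpace X] {μ : Measure X}
    (Hsymm : ∀ t : ℝ, 0 < t → ∀ z y : X, H t z y = H t y z)
    (Hsemigroup : ∀ t s : ℝ, 0 < t → 0 < s → ∀ z y : X,
      H (t + s) z y = ∫ w, H t z w * H s w y ∂μ)
    {t : ℝ} (ht : 0 < t) :
    H (2 * t) x x = ∫ y, H t x y ^ 2 ∂μ := by
  rw [two_mul, Hsemigroup t t ht ht x x]
  congr 1 with y
  rw [Hsymm t ht y x, sq]

theorem sq_one_sub_tailMassBound_le [MetricSpace X] [MeasurableSpace X] [OpensMeasurableSpace X]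
    {μ : Measure X}
    (Hnonneg : ∀ t : ℝ, 0 < t → ∀ z y : X, 0 ≤ H t z y)
    (Hsymm : ∀ t : ℝ, 0 < t → ∀ z y : X, H t z y = H t y z)
    (Hsemigroup : ∀ t s : ℝ, 0 < t → 0 < s → ∀ z y : X,
      H (t + s) z y = ∫ w, H t z w * H s w y ∂μ)
    (Hstoch : ∀ t : ℝ, 0 < t → ∀ z : X, ∫ y, H t z y ∂μ = 1)
    (Hmark : ∀ t : ℝ, 0 < t → ∀ z y : X,
      H t z y ≤ (4 * π * t) ^ (-(m : ℝ) / 2) * exp (-(dist z y) ^ 2 / (4 * t)))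
    (hm : 0 < m) {E : ℝ} (hE : 0 ≤ E)
    (hball : ∀ s, 0 < s → μ (ball x s) ≤ ENNReal.ofReal (E * omegaBall m * s ^ (m : ℝ)))
    {r : ℝ} (hr : 0 < r) (hδ : tailMassBound m E (volumeRatio μ x m r) ≤ 1) :
    (1 - tailMassBound m E (volumeRatio μ x m r)) ^ 2 ≤ volumeRatio μ x m r *
      ((4 * π * (r ^ 2 / (2 * cmScale m))) ^ ((m : ℝ) / 2) * H (r ^ 2 / (2 * cmScale m)) x x) := by
  have ha := cmScale_pos hm
  set t := r ^ 2 / (4 * cmScale m)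
  have ht : 0 < t := by positivity
  have hτ : r ^ 2 / (2 * cmScale m) = 2 * t := by simp only [t]; field_simp; ring
  have hrt : r ^ 2 / (4 * t) = cmScale m := by simp only [t]; field_simp
  have hV : (μ (ball x r)).toReal = volumeRatio μ x m r * (4 * π * (2 * t)) ^ ((m : ℝ) / 2) := by
    have := omegaBall_pos m
    rw [volumeRatio, ← hτ, ← omegaBall_mul_pow hm hr.le, div_mul_cancel₀ _ (by positivity)]
  have hδ_eq : (4 * π * t) ^ (-(m : ℝ) / 2) * (E * omegaBall m * (4 * t) ^ ((m : ℝ) / 2) *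
      incGamma ((m : ℝ) / 2 + 1) (r ^ 2 / (4 * t)) -
        (μ (ball x r)).toReal * exp (-(r ^ 2 / (4 * t)))) =
      tailMassBound m E (volumeRatio μ x m r) := by
    have hΓ : 0 < Gamma ((m : ℝ) / 2 + 1) := Gamma_pos_of_pos (by positivity)
    have h2t : (4 * π * (2 * t)) ^ ((m : ℝ) / 2) =
        2 ^ ((m : ℝ) / 2) * (4 * π * t) ^ ((m : ℝ) / 2) := by
      rw [← mul_rpow zero_le_two (by positivity)]; ring_nf
    have hπ : (4 * π * t) ^ ((m : ℝ) / 2) = (4 * t) ^ ((m : ℝ) / 2) * π ^ ((m : ℝ) / 2) := by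
      rw [← mul_rpow (by positivity) pi_pos.le]; ring_nf
    rw [hrt, hV, h2t, tailMassBound, omegaBall, neg_div, rpow_neg (by positivity), hπ]
    field_simp
  have key := one_sub_sq_le_integral_sq_mul_measure_ball (K := E * omegaBall m) (d := m)
    (by have := omegaBall_pos m; positivity) (by positivity) hball hr ht (Hnonneg t ht x)
    (Hstoch t ht x) (Hmark t ht x) (hδ_eq ▸ hδ)
  rw [hδ_eq, ← heatKernel_two_mul_eq_integral_sq Hsymm Hsemigroup ht, hV] at key
  rw [hτ]
  linarith

end HeatKernel

theorem le_limsup_of_tendsto_of_le_comp {α β : Type*} {l : Filter α} [l.NeBot] {l' : Filter β}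
    {f : β → ℝ} {g : α → ℝ} {φ : α → β} {L : ℝ} (hg : Tendsto g l (𝓝 L))
    (hφ : Tendsto φ l l') (hle : ∀ᶠ a in l, g a ≤ f (φ a))
    (hf : IsBoundedUnder (· ≤ ·) l' f) : L ≤ limsup f l' := by
  refine forall_lt_imp_le_iff_le_of_dense.mp fun c hc => le_limsup_of_frequently_le ?_ hf
  exact hφ.frequently (((hg.eventually_const_lt hc).and hle).mono fun a h =>
    h.1.le.trans h.2).frequently

theorem main_theorem_general {X : Type*} [MetricSpace X] [MeasurableSpace X] [BorelSpace X]
    (μ : Measure X) (m : ℕ) (hm : 1 ≤ m) (x : X)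
    (H : ℝ → X → X → ℝ)
    (Hnonneg : ∀ t : ℝ, 0 < t → ∀ z y : X, 0 ≤ H t z y)
    (Hsymm : ∀ t : ℝ, 0 < t → ∀ z y : X, H t z y = H t y z)
    (Hsemigroup : ∀ t s : ℝ, 0 < t → 0 < s → ∀ z y : X,
      H (t + s) z y = ∫ w, H t z w * H s w y ∂μ)
    (Hstoch : ∀ t : ℝ, 0 < t → ∀ z : X, ∫ y, H t z y ∂μ = 1)
    (Hmark : ∀ t : ℝ, 0 < t → ∀ z y : X,
      H t z y ≤ (4 * π * t) ^ (-(m : ℝ) / 2) * Real.exp (-(dist z y) ^ 2 / (4 * t)))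
    (E : ℝ)
    (Qmono : ∀ s₁ s₂ : ℝ, 0 < s₁ → s₁ ≤ s₂ →
      (μ (Metric.ball x s₁)).toReal / (omegaBall m * s₁ ^ m) ≤
        (μ (Metric.ball x s₂)).toReal / (omegaBall m * s₂ ^ m))
    (Qlim : Tendsto (fun s : ℝ => (μ (Metric.ball x s)).toReal / (omegaBall m * s ^ m))
      atTop (nhds E))
    (hE : 0 < E) (hEC : E < 1 / Cm m) :
    (1 - E * Cm m) ^ 2 / E ≤
        limsup (fun t : ℝ => (4 * π * t) ^ ((m : ℝ) / 2) * H t x x) atTop ∧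
      limsup (fun t : ℝ => (4 * π * t) ^ ((m : ℝ) / 2) * H t x x) atTop ≤ 1 := by
  have hm0 : 0 < m := hm
  have hQ : Tendsto (volumeRatio μ x m) atTop (𝓝 E) := Qlim
  have hF_le : ∀ᶠ t in atTop, (4 * π * t) ^ ((m : ℝ) / 2) * H t x x ≤ 1 :=
    (eventually_gt_atTop 0).mono fun t ht => rpow_mul_heatKernel_le_one Hmark ht
  have hF_nonneg : ∀ᶠ t in atTop, 0 ≤ (4 * π * t) ^ ((m : ℝ) / 2) * H t x x :=
    (eventually_gt_atTop 0).mono fun t ht => mul_nonneg (by positivity) (Hnonneg t ht x x)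
  have hECm : E * Cm m < 1 := by rwa [lt_div_iff₀ (Cm_pos hm0)] at hEC
  have hδ : Tendsto (fun r => tailMassBound m E (volumeRatio μ x m r)) atTop (𝓝 (E * Cm m)) :=
    tailMassBound_self hm0 E ▸ ((continuous_tailMassBound m E).tendsto E).comp hQ
  have hlower : ∀ᶠ r in atTop, (1 - tailMassBound m E (volumeRatio μ x m r)) ^ 2 /
      volumeRatio μ x m r ≤ (4 * π * (r ^ 2 / (2 * cmScale m))) ^ ((m : ℝ) / 2) *
        H (r ^ 2 / (2 * cmScale m)) x x := by
    filter_upwards [eventually_gt_atTop 0, hδ.eventually (ge_mem_nhds hECm),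
      hQ.eventually_const_lt hE] with r hr hδr hQr
    rw [div_le_iff₀' hQr]
    exact sq_one_sub_tailMassBound_le Hnonneg Hsymm Hsemigroup Hstoch Hmark hm0 hE.le
      (measure_ball_le_of_volumeRatio hE Qmono hQ) hr hδr
  refine ⟨le_limsup_of_tendsto_of_le_comp (((hδ.const_sub 1).pow 2).div hQ hE.ne')
    ((tendsto_pow_atTop two_ne_zero).atTop_div_const (by have := cmScale_pos hm0; positivity))
    hlower (isBoundedUnder_of_eventually_le hF_le), limsup_le_of_le ?_ hF_le⟩
  exact (isBoundedUnder_of_eventually_ge hF_nonneg).isCoboundedUnder_le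

theorem main_theorem {X : Type*} [MetricSpace X] [MeasurableSpace X] [BorelSpace X]
    (μ : Measure X) (m : ℕ) (hm : 1 ≤ m) (x : X)
    (H : ℝ → X → X → ℝ)
    (Hmeas : ∀ t : ℝ, 0 < t → Measurable (Function.uncurry (H t)))
    (Hnonneg : ∀ t : ℝ, 0 < t → ∀ z y : X, 0 ≤ H t z y)
    (Hsymm : ∀ t : ℝ, 0 < t → ∀ z y : X, H t z y = H t y z)
    (Hsemigroup : ∀ t s : ℝ, 0 < t → 0 < s → ∀ z y : X,
      H (t + s) z y = ∫ w, H t z w * H s w y ∂μ)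
    (Hstoch : ∀ t : ℝ, 0 < t → ∀ z : X, ∫ y, H t z y ∂μ = 1)
    (Hmark : ∀ t : ℝ, 0 < t → ∀ z y : X,
      H t z y ≤ (4 * π * t) ^ (-(m : ℝ) / 2) * Real.exp (-(dist z y) ^ 2 / (4 * t)))
    (E : ℝ)
    (Qmono : ∀ s₁ s₂ : ℝ, 0 < s₁ → s₁ ≤ s₂ →
      (μ (Metric.ball x s₁)).toReal / (omegaBall m * s₁ ^ m) ≤
        (μ (Metric.ball x s₂)).toReal / (omegaBall m * s₂ ^ m))
    (Qlim : Tendsto (fun s : ℝ => (μ (Metric.ball x s)).toReal / (omegaBall m * s ^ m))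
      atTop (nhds E))
    (hE : 0 < E) (hEC : E < 1 / Cm m) :
    (1 - E * Cm m) ^ 2 / E ≤
        limsup (fun t : ℝ => (4 * π * t) ^ ((m : ℝ) / 2) * H t x x) atTop ∧
      limsup (fun t : ℝ => (4 * π * t) ^ ((m : ℝ) / 2) * H t x x) atTop ≤ 1 :=
  main_theorem_general μ m hm x H Hnonneg Hsymm Hsemigroup Hstoch Hmark E Qmono Qlim hE hEC
end

section
/- Let (X,d) be a metric space equipped with a Borel measure μ, let m ≥ 1 be an integer, let E > 0, and fix x ∈ X. Let H : (0,∞) × X × X → [0,∞) be a measurable kernel that is symmetric in the space variables, satisfies the semigroup identity H(t+s,x,y) = ∫_X H(t,x,z)·H(s,z,y) dμ(z), is stochastically complete (∫_X H(t,z,y) dμ(y) = 1 for all t > 0 and z ∈ X), and satisfies the Markvorsen bound of dimension m: H(t,z,y) ≤ (4πt)^{-m/2}·exp(-d(z,y)²/(4t)) for all t > 0 and z,y ∈ X. Assume μ(B_s(x)) ≤ E·ω_m·s^m for every s > 0. Then for every t > 0, setting R_t := 2·((m/2)·Γ(m/2))^{1/m}·t^{1/2}, one has (4πt)^{m/2}·H(t,x,x)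 ≥ (1 − ∫_{X∖B_{R_t}(x)} H(t/2,x,y) dμ(y))² / E. -/
open MeasureTheory Real Filter Set

/-!
Split the heat mass of `y ↦ H(t/2, x, y)` at the radius `R_t`. By the semigroup identity and symmetry,
`H(t, x, x) = ∫ H(t/2, x, y)² dμ(y)`, and by Cauchy–Schwarz on `B_{R_t}(x)` the squared mass inside the
ball is at most `μ(B_{R_t}(x)) · H(t, x, x) ≤ E ω_m R_t^m · H(t, x, x) = E (4πt)^{m/2} H(t, x, x)`.
Stochastic completeness identifies the mass inside the ball with one minus the mass outside.
-/

section CauchySchwarz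

variable {α : Type*} [MeasurableSpace α] {μ : Measure α} {f : α → ℝ}

lemma sq_integral_le_measureReal_univ_mul_integral_sq [IsFiniteMeasure μ] (hf0 : 0 ≤ᵐ[μ] f)
    (hf : MemLp f 2 μ) : (∫ a, f a ∂μ) ^ 2 ≤ μ.real univ * ∫ a, f a ^ 2 ∂μ := by
  have holder := integral_mul_le_Lp_mul_Lq_of_nonneg Real.HolderConjugate.two_two hf0
    (ae_of_all _ fun _ => zero_le_one) (by simpa using hf) (memLp_const 1)
  simp only [mul_one, Real.rpow_two, one_pow, integral_const, smul_eq_mul,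
    ← Real.sqrt_eq_rpow] at holder
  calc (∫ a, f a ∂μ) ^ 2 ≤ (√(∫ a, f a ^ 2 ∂μ) * √(μ.real univ)) ^ 2 :=
        pow_le_pow_left₀ (integral_nonneg_of_ae hf0) holder 2
    _ = μ.real univ * ∫ a, f a ^ 2 ∂μ := by
        rw [mul_pow, sq_sqrt (integral_nonneg fun _ => sq_nonneg _), sq_sqrt measureReal_nonneg,
          mul_comm]

lemma sq_setIntegral_le_measureReal_mul_integral_sq {B : Set α} (hB : μ B ≠ ⊤)
    (hf0 : 0 ≤ᵐ[μ] f) (hf : MemLp f 2 μ) :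
    (∫ a in B, f a ∂μ) ^ 2 ≤ μ.real B * ∫ a, f a ^ 2 ∂μ := by
  have : IsFiniteMeasure (μ.restrict B) := isFiniteMeasure_restrict.2 hB
  calc (∫ a in B, f a ∂μ) ^ 2 ≤ μ.real B * ∫ a in B, f a ^ 2 ∂μ := by
        simpa only [measureReal_restrict_apply_univ] using
          sq_integral_le_measureReal_univ_mul_integral_sq (ae_restrict_of_ae hf0) (hf.restrict B)
    _ ≤ μ.real B * ∫ a, f a ^ 2 ∂μ := mul_le_mul_of_nonneg_left
        (setIntegral_le_integral hf.integrable_sq (ae_of_all _ fun _ => sq_nonneg _))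
        measureReal_nonneg

lemma memLp_two_of_integrable_of_ae_norm_le {C : ℝ} (hf : Integrable f μ)
    (hC : ∀ᵐ a ∂μ, ‖f a‖ ≤ C) : MemLp f 2 μ :=
  (memLp_two_iff_integrable_sq hf.aestronglyMeasurable).2 <| by
    simpa only [sq] using hf.bdd_mul hf.aestronglyMeasurable hC

end CauchySchwarz

noncomputable def heatRadius (m : ℕ) (t : ℝ) : ℝ :=
  2 * (((m : ℝ) / 2) * Real.Gamma ((m : ℝ) / 2)) ^ (1 / (m : ℝ)) * t ^ ((1 : ℝ) / 2)

section HeatRadius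

variable {m : ℕ} {t : ℝ}

lemma half_mul_Gamma_half_pos (hm : m ≠ 0) : 0 < ((m : ℝ) / 2) * Real.Gamma ((m : ℝ) / 2) := by
  have : (0 : ℝ) < m / 2 := by positivity
  exact mul_pos this (Real.Gamma_pos_of_pos this)

lemma heatRadius_pos (hm : m ≠ 0) (ht : 0 < t) : 0 < heatRadius m t := by
  have := half_mul_Gamma_half_pos hm
  unfold heatRadius
  positivity

/-- `Γ(m/2 + 1) = (m/2) Γ(m/2)`, so `ω_m R_t^m = π^{m/2} 2^m t^{m/2} = (4πt)^{m/2}`. -/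
lemma omegaBall_mul_heatRadius_pow (hm : m ≠ 0) (ht : 0 ≤ t) :
    omegaBall m * heatRadius m t ^ m = (4 * π * t) ^ ((m : ℝ) / 2) := by
  have hm0 : (m : ℝ) ≠ 0 := Nat.cast_ne_zero.2 hm
  set a : ℝ := ((m : ℝ) / 2) * Real.Gamma ((m : ℝ) / 2)
  have ha : 0 < a := half_mul_Gamma_half_pos hm
  have hΓ : Real.Gamma ((m : ℝ) / 2 + 1) = a := Real.Gamma_add_one (by positivity)
  have hroot : (a ^ (1 / (m : ℝ))) ^ m = a := by
    rw [← Real.rpow_natCast, ← Real.rpow_mul ha.le, one_div_mul_cancel hm0, Real.rpow_one]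
  have hsqrt : (t ^ ((1 : ℝ) / 2)) ^ m = t ^ ((m : ℝ) / 2) := by
    rw [← Real.rpow_natCast, ← Real.rpow_mul ht, one_div_mul_eq_div]
  have hfour : (4 : ℝ) ^ ((m : ℝ) / 2) = 2 ^ m := by
    rw [show (4 : ℝ) = 2 ^ (2 : ℝ) by norm_num, ← Real.rpow_mul (by norm_num),
      mul_div_cancel₀ _ two_ne_zero, Real.rpow_natCast]
  rw [omegaBall, hΓ, heatRadius, mul_pow, mul_pow, hroot, hsqrt,
    Real.mul_rpow (by positivity) ht, Real.mul_rpow (by norm_num) Real.pi_pos.le, hfour]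
  field_simp

end HeatRadius

lemma kernel_diag_eq_integral_sq {X : Type*} [MeasurableSpace X] {μ : Measure X}
    {H : ℝ → X → X → ℝ} (Hsymm : ∀ t : ℝ, 0 < t → ∀ z y : X, H t z y = H t y z)
    (Hsemigroup : ∀ t s : ℝ, 0 < t → 0 < s → ∀ z y : X,
      H (t + s) z y = ∫ w, H t z w * H s w y ∂μ)
    {t : ℝ} (ht : 0 < t) (x : X) : H t x x = ∫ y, H (t / 2) x y ^ 2 ∂μ := by
  have hs : 0 < t / 2 := half_pos ht
  rw [← add_halves t, Hsemigroup _ _ hs hs, add_halves]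
  simp only [Hsymm _ hs _ x, sq]

theorem prelimit_inequality_general {X : Type*} [MetricSpace X] [MeasurableSpace X] [BorelSpace X]
    (μ : Measure X) (m : ℕ) (hm : 1 ≤ m) (E : ℝ) (hE : 0 < E) (x : X)
    (H : ℝ → X → X → ℝ)
    (Hnonneg : ∀ t : ℝ, 0 < t → ∀ z y : X, 0 ≤ H t z y)
    (Hsymm : ∀ t : ℝ, 0 < t → ∀ z y : X, H t z y = H t y z)
    (Hsemigroup : ∀ t s : ℝ, 0 < t → 0 < s → ∀ z y : X,
      H (t + s) z y = ∫ w, H t z w * H s w y ∂μ)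
    (Hstoch : ∀ t : ℝ, 0 < t → ∀ z : X, ∫ y, H t z y ∂μ = 1)
    (Hmark : ∀ t : ℝ, 0 < t → ∀ z y : X,
      H t z y ≤ (4 * π * t) ^ (-(m : ℝ) / 2) * Real.exp (-(dist z y) ^ 2 / (4 * t)))
    (hvol : ∀ s : ℝ, 0 < s → μ (Metric.ball x s) ≤ ENNReal.ofReal (E * omegaBall m * s ^ m)) :
    ∀ t : ℝ, 0 < t →
      (1 - ∫ y in (Metric.ball x
            (2 * (((m : ℝ) / 2) * Real.Gamma ((m : ℝ) / 2)) ^ (1 / (m : ℝ)) *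
              t ^ ((1 : ℝ) / 2)))ᶜ,
          H (t / 2) x y ∂μ) ^ 2 / E ≤
        (4 * π * t) ^ ((m : ℝ) / 2) * H t x x := by
  intro t ht
  have hs : 0 < t / 2 := half_pos ht
  have hm0 : m ≠ 0 := Nat.one_le_iff_ne_zero.1 hm
  change (1 - ∫ y in (Metric.ball x (heatRadius m t))ᶜ, H (t / 2) x y ∂μ) ^ 2 / E ≤ _
  set B := Metric.ball x (heatRadius m t)
  have hint : Integrable (H (t / 2) x) μ :=
    Integrable.of_integral_ne_zero (by rw [Hstoch _ hs]; exact one_ne_zero)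
  have hbdd : ∀ y, ‖H (t / 2) x y‖ ≤ (4 * π * (t / 2)) ^ (-(m : ℝ) / 2) := fun y => by
    rw [Real.norm_of_nonneg (Hnonneg _ hs x y)]
    refine (Hmark _ hs x y).trans (mul_le_of_le_one_right (by positivity) ?_)
    exact Real.exp_le_one_iff.2
      (div_nonpos_of_nonpos_of_nonneg (neg_nonpos.2 (sq_nonneg _)) (by positivity))
  have hvolB : μ B ≤ ENNReal.ofReal (E * (4 * π * t) ^ ((m : ℝ) / 2)) := by
    simpa only [mul_assoc, omegaBall_mul_heatRadius_pow hm0 ht.le] using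
      hvol _ (heatRadius_pos hm0 ht)
  have hinside : 1 - ∫ y in Bᶜ, H (t / 2) x y ∂μ = ∫ y in B, H (t / 2) x y ∂μ := by
    rw [← Hstoch _ hs x, ← integral_add_compl Metric.isOpen_ball.measurableSet hint,
      add_sub_cancel_right]
  rw [div_le_iff₀ hE, hinside, kernel_diag_eq_integral_sq Hsymm Hsemigroup ht x]
  calc (∫ y in B, H (t / 2) x y ∂μ) ^ 2
      ≤ μ.real B * ∫ y, H (t / 2) x y ^ 2 ∂μ :=
        sq_setIntegral_le_measureReal_mul_integral_sq (hvolB.trans_lt ENNReal.ofReal_lt_top).ne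
          (ae_of_all _ (Hnonneg _ hs x))
          (memLp_two_of_integrable_of_ae_norm_le hint (ae_of_all _ hbdd))
    _ ≤ E * (4 * π * t) ^ ((m : ℝ) / 2) * ∫ y, H (t / 2) x y ^ 2 ∂μ :=
        mul_le_mul_of_nonneg_right (ENNReal.toReal_le_of_le_ofReal (by positivity) hvolB)
          (integral_nonneg fun _ => sq_nonneg _)
    _ = ((4 * π * t) ^ ((m : ℝ) / 2) * ∫ y, H (t / 2) x y ^ 2 ∂μ) * E := by ring

theorem prelimit_inequality {X : Type*} [MetricSpace X] [MeasurableSpace X] [BorelSpace X]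
    (μ : Measure X) (m : ℕ) (hm : 1 ≤ m) (E : ℝ) (hE : 0 < E) (x : X)
    (H : ℝ → X → X → ℝ)
    (Hmeas : ∀ t : ℝ, 0 < t → Measurable (Function.uncurry (H t)))
    (Hnonneg : ∀ t : ℝ, 0 < t → ∀ z y : X, 0 ≤ H t z y)
    (Hsymm : ∀ t : ℝ, 0 < t → ∀ z y : X, H t z y = H t y z)
    (Hsemigroup : ∀ t s : ℝ, 0 < t → 0 < s → ∀ z y : X,
      H (t + s) z y = ∫ w, H t z w * H s w y ∂μ)
    (Hstoch : ∀ t : ℝ, 0 < t → ∀ z : X, ∫ y, H t z y ∂μ = 1)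
    (Hmark : ∀ t : ℝ, 0 < t → ∀ z y : X,
      H t z y ≤ (4 * π * t) ^ (-(m : ℝ) / 2) * Real.exp (-(dist z y) ^ 2 / (4 * t)))
    (hvol : ∀ s : ℝ, 0 < s → μ (Metric.ball x s) ≤ ENNReal.ofReal (E * omegaBall m * s ^ m)) :
    ∀ t : ℝ, 0 < t →
      (1 - ∫ y in (Metric.ball x
            (2 * (((m : ℝ) / 2) * Real.Gamma ((m : ℝ) / 2)) ^ (1 / (m : ℝ)) *
              t ^ ((1 : ℝ) / 2)))ᶜ,
          H (t / 2) x y ∂μ) ^ 2 / E ≤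
        (4 * π * t) ^ ((m : ℝ) / 2) * H t x x :=
  prelimit_inequality_general μ m hm E hE x H Hnonneg Hsymm Hsemigroup Hstoch Hmark hvol
end
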